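/- arXiv:1009.6019 — 5 statements merged into one kernel-verified Lean document; each statement's English description precedes it below -/
import Mathlib

section
/- Let A, B : ℝ → ℝ be continuous functions on [0,1] satisfying A(1/2 + t) = -A(1/2 - t) and B(1/2 + t) = -B(1/2 - t) for all t ∈ [0, 1/2]. If z : [0,1] → ℝ is a solution of the differential equation z' = A(t)z³ + B(t)z², then z(1/2 + t) = z(1/2 - t) for all t ∈ [0, 1/2]; in particular z(0) = z(1). -/
/-! Reflecting time about `1/2` changes the sign of a derivative, and the antisymmetry of `A`
and `B` about `1/2` changes it back, so `t ↦ z (1 - t)` solves the same equation as `z`. Both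
solutions pass through `z (1/2)` at `t = 1/2`, hence they coincide by uniqueness; the right-hand
side is Lipschitz in `z` on the bounded range of the solutions. -/

open Set

theorem apply_one_sub_eq_neg_of_antisymm_half {G : Type*} [AddGroup G] {f : ℝ → G}
    (hf : ∀ t ∈ Icc (0:ℝ) (1/2), f (1/2 + t) = -f (1/2 - t)) {t : ℝ}
    (ht : t ∈ Icc (0:ℝ) 1) :
    f (1 - t) = -f t := by
  rcases le_total t (1/2) with h | h
  · have := hf (1/2 - t) ⟨by linarith, by linarith [ht.1]⟩
    rwa [show (1/2 + (1/2 - t) : ℝ) = 1 - t by ring, sub_sub_cancel] at this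
  · have := hf (t - 1/2) ⟨by linarith, by linarith [ht.2]⟩
    rw [add_sub_cancel, show (1/2 - (t - 1/2) : ℝ) = 1 - t by ring] at this
    rw [this, neg_neg]

theorem lipschitzOnWith_cubic_add_quadratic {a b α β M : ℝ}
    (ha : |a| ≤ α) (hb : |b| ≤ β) :
    LipschitzOnWith (3 * α * M ^ 2 + 2 * β * M).toNNReal (fun x ↦ a * x ^ 3 + b * x ^ 2)
      (Icc (-M) M) := by
  have hα : 0 ≤ α := (abs_nonneg a).trans ha
  have hβ : 0 ≤ β := (abs_nonneg b).trans hb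
  refine (convex_Icc _ _).lipschitzOnWith_of_nnnorm_hasDerivWithin_le
    (f' := fun x ↦ a * (3 * x ^ 2) + b * (2 * x)) (fun x _ ↦ ?_) (fun x hx ↦ ?_)
  · have := ((hasDerivAt_pow 3 x).const_mul a).fun_add ((hasDerivAt_pow 2 x).const_mul b)
    norm_num at this
    exact this.hasDerivWithinAt
  · have hxM : |x| ≤ M := abs_le.2 hx
    have hM : 0 ≤ M := (abs_nonneg x).trans hxM
    rw [Real.le_toNNReal_iff_coe_le (by positivity), coe_nnnorm, Real.norm_eq_abs]
    calc |a * (3 * x ^ 2) + b * (2 * x)| ≤ |a * (3 * x ^ 2)| + |b * (2 * x)| := abs_add_le _ _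
      _ = |a| * (3 * |x| ^ 2) + |b| * (2 * |x|) := by
          rw [abs_mul, abs_mul, abs_mul, abs_mul, abs_pow]; norm_num
      _ ≤ α * (3 * M ^ 2) + β * (2 * M) := by gcongr
      _ = 3 * α * M ^ 2 + 2 * β * M := by ring

theorem eqOn_Icc_of_hasDerivAt_cubic_add_quadratic {A B f g : ℝ → ℝ} {a b t₀ : ℝ}
    (hA : ContinuousOn A (Icc a b)) (hB : ContinuousOn B (Icc a b))
    (hf : ∀ t ∈ Icc a b, HasDerivAt f (A t * f t ^ 3 + B t * f t ^ 2) t)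
    (hg : ∀ t ∈ Icc a b, HasDerivAt g (A t * g t ^ 3 + B t * g t ^ 2) t)
    (ht₀ : t₀ ∈ Ioo a b) (heq : f t₀ = g t₀) :
    EqOn f g (Icc a b) := by
  have hfc : ContinuousOn f (Icc a b) := fun t ht ↦ (hf t ht).continuousAt.continuousWithinAt
  have hgc : ContinuousOn g (Icc a b) := fun t ht ↦ (hg t ht).continuousAt.continuousWithinAt
  obtain ⟨α, hα⟩ := isCompact_Icc.exists_bound_of_continuousOn hA
  obtain ⟨β, hβ⟩ := isCompact_Icc.exists_bound_of_continuousOn hB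
  obtain ⟨Mf, hMf⟩ := isCompact_Icc.exists_bound_of_continuousOn hfc
  obtain ⟨Mg, hMg⟩ := isCompact_Icc.exists_bound_of_continuousOn hgc
  have mem_Icc_max {h : ℝ → ℝ} {N : ℝ} (hN : ∀ t ∈ Icc a b, ‖h t‖ ≤ N)
      (hle : N ≤ max Mf Mg) :
      ∀ t ∈ Ioo a b, h t ∈ Icc (-max Mf Mg) (max Mf Mg) :=
    fun t ht ↦ abs_le.1 ((hN t (Ioo_subset_Icc_self ht)).trans hle)
  exact ODE_solution_unique_of_mem_Icc (v := fun t x ↦ A t * x ^ 3 + B t * x ^ 2)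
    (fun t ht ↦ lipschitzOnWith_cubic_add_quadratic (hα t (Ioo_subset_Icc_self ht))
      (hβ t (Ioo_subset_Icc_self ht)))
    ht₀ hfc (fun t ht ↦ hf t (Ioo_subset_Icc_self ht)) (mem_Icc_max hMf (le_max_left _ _))
    hgc (fun t ht ↦ hg t (Ioo_subset_Icc_self ht)) (mem_Icc_max hMg (le_max_right _ _)) heq

theorem stmt_0 (A B z : ℝ → ℝ)
    (hA : ContinuousOn A (Icc 0 1)) (hB : ContinuousOn B (Icc 0 1))
    (hAsym : ∀ t ∈ Icc (0:ℝ) (1/2), A (1/2 + t) = -A (1/2 - t))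
    (hBsym : ∀ t ∈ Icc (0:ℝ) (1/2), B (1/2 + t) = -B (1/2 - t))
    (hz : ∀ t ∈ Icc (0:ℝ) 1, HasDerivAt z (A t * z t ^ 3 + B t * z t ^ 2) t) :
    (∀ t ∈ Icc (0:ℝ) (1/2), z (1/2 + t) = z (1/2 - t)) ∧ z 0 = z 1 := by
  set w : ℝ → ℝ := fun t ↦ z (1 - t)
  have hw : ∀ t ∈ Icc (0:ℝ) 1, HasDerivAt w (A t * w t ^ 3 + B t * w t ^ 2) t := by
    intro t ht
    have h1t : 1 - t ∈ Icc (0:ℝ) 1 := ⟨by linarith [ht.2], by linarith [ht.1]⟩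
    refine ((hz (1 - t) h1t).comp_const_sub 1 t).congr_deriv ?_
    rw [apply_one_sub_eq_neg_of_antisymm_half hAsym ht,
      apply_one_sub_eq_neg_of_antisymm_half hBsym ht]
    ring
  have hzw : EqOn z w (Icc 0 1) :=
    eqOn_Icc_of_hasDerivAt_cubic_add_quadratic hA hB hz hw (t₀ := 1/2) (by norm_num)
      (by norm_num [w])
  have hsym : ∀ t ∈ Icc (0:ℝ) (1/2), z (1/2 + t) = z (1/2 - t) := fun t ht ↦ by
    rw [hzw ⟨by linarith [ht.1], by linarith [ht.2]⟩]
    exact congrArg z (by ring)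
  have hends := hsym (1/2) (by norm_num)
  norm_num at hends
  exact ⟨hsym, hends.symm⟩
end

section
/- Suppose A(t) = s'(t)·A₁(s(t)) and B(t) = s'(t)·B₁(s(t)) for all t ∈ [0,1], where s : [0,1] → ℝ is continuously differentiable with s(0) = s(1), and A₁, B₁ : ℝ → ℝ are continuous. Then every solution z of z' = A(t)z³ + B(t)z² on [0,1] with sufficiently small |z(0)| satisfies z(0) = z(1). -/
/-!
The composition condition makes every small solution factor through `s`. Solve the reduced
equation `w' = A₁(u) w³ + B₁(u) w²` on an interval `[m, M] ⊇ s([0, 1])` with `w(s 0) = z(0)`: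
since the field is quadratically small near `w = 0`, Picard–Lindelöf gives this solution on the
whole of `[m, M]` once `|z(0)|` is small. By the chain rule `w ∘ s` solves the original equation,
so `z = w ∘ s` on `[0, 1]` by uniqueness, and `z(1) = w(s 1) = w(s 0) = z(0)`.
-/

open Set Metric

def abelField (a b w : ℝ) : ℝ := a * w ^ 3 + b * w ^ 2

lemma abs_abelField_le {a b w Ca Cb R : ℝ} (ha : |a| ≤ Ca) (hb : |b| ≤ Cb) (hw : |w| ≤ R) :
    |abelField a b w| ≤ Ca * R ^ 3 + Cb * R ^ 2 := by
  have hCa : 0 ≤ Ca := (abs_nonneg a).trans ha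
  have hCb : 0 ≤ Cb := (abs_nonneg b).trans hb
  calc |a * w ^ 3 + b * w ^ 2| ≤ |a| * |w| ^ 3 + |b| * |w| ^ 2 :=
        (abs_add_le _ _).trans_eq (by rw [abs_mul, abs_mul, abs_pow, abs_pow])
    _ ≤ Ca * R ^ 3 + Cb * R ^ 2 := by gcongr

lemma lipschitzOnWith_abelField {a b Ca Cb R : ℝ} (ha : |a| ≤ Ca) (hb : |b| ≤ Cb) :
    LipschitzOnWith (3 * Ca * R ^ 2 + 2 * Cb * R).toNNReal (abelField a b)
      (closedBall 0 R) := by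
  have hCa : 0 ≤ Ca := (abs_nonneg a).trans ha
  have hCb : 0 ≤ Cb := (abs_nonneg b).trans hb
  refine (convex_closedBall 0 R).lipschitzOnWith_of_nnnorm_hasDerivWithin_le
    (f' := fun w => 3 * a * w ^ 2 + 2 * b * w) (fun w _ => ?_) (fun w hw => ?_)
  · have := ((hasDerivAt_pow 3 w).const_mul a).add ((hasDerivAt_pow 2 w).const_mul b)
    convert this.hasDerivWithinAt using 1
    · rfl
    · push_cast; ring
  · have hw : |w| ≤ R := by simpa using hw
    have hR : 0 ≤ R := (abs_nonneg w).trans hw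
    rw [← NNReal.coe_le_coe, coe_nnnorm, Real.coe_toNNReal _ (by positivity), Real.norm_eq_abs]
    calc |3 * a * w ^ 2 + 2 * b * w| ≤ 3 * |a| * |w| ^ 2 + 2 * |b| * |w| :=
          (abs_add_le _ _).trans_eq (by simp only [abs_mul, abs_pow]; norm_num)
      _ ≤ 3 * Ca * R ^ 2 + 2 * Cb * R := by gcongr

lemma exists_hasDerivWithinAt_abelField {a b : ℝ → ℝ} {m M u₀ : ℝ}
    (ha : ContinuousOn a (Icc m M)) (hb : ContinuousOn b (Icc m M)) (hu₀ : u₀ ∈ Icc m M) :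
    ∃ ε > 0, ∀ w₀, |w₀| < ε → ∃ y : ℝ → ℝ, y u₀ = w₀ ∧
      ∀ u ∈ Icc m M, HasDerivWithinAt y (abelField (a u) (b u) (y u)) (Icc m M) u := by
  obtain ⟨Ca, hCa⟩ := isCompact_Icc.exists_bound_of_continuousOn ha
  obtain ⟨Cb, hCb⟩ := isCompact_Icc.exists_bound_of_continuousOn hb
  simp only [Real.norm_eq_abs] at hCa hCb
  have hCa₀ : 0 ≤ Ca := (abs_nonneg _).trans (hCa u₀ hu₀)
  have hCb₀ : 0 ≤ Cb := (abs_nonneg _).trans (hCb u₀ hu₀)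
  have hmM : 0 ≤ M - m := by linarith [hu₀.1, hu₀.2]
  set X := (8 * Ca + 4 * Cb) * (M - m)
  have hX : 0 ≤ X := by positivity
  set ε := 1 / (X + 1)
  have hε : 0 < ε := by positivity
  have hε₁ : ε ≤ 1 := div_le_one_of_le₀ (by linarith) (by positivity)
  have hXε : X * ε ≤ 1 := by
    rw [mul_one_div]; exact div_le_one_of_le₀ (by linarith) (by positivity)
  refine ⟨ε, hε, fun w₀ hw₀ => ?_⟩
  -- Picard–Lindelöf on the ball of radius `2ε` about `0`, for initial values in the ball of
  -- radius `ε`: the field is `O(ε²)` there, so the solution cannot leave the ball on `[m, M]`.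
  have hpl : IsPicardLindelof (fun u => abelField (a u) (b u)) ⟨u₀, hu₀⟩ 0 (2 * ε).toNNReal
      ε.toNNReal (Ca * (2 * ε) ^ 3 + Cb * (2 * ε) ^ 2).toNNReal
      (3 * Ca * (2 * ε) ^ 2 + 2 * Cb * (2 * ε)).toNNReal := by
    have h2ε : ((2 * ε).toNNReal : ℝ) = 2 * ε := Real.coe_toNNReal _ (by positivity)
    refine ⟨fun u hu => ?_, fun w _ => ?_, fun u hu w hw => ?_, ?_⟩
    · rw [h2ε]; exact lipschitzOnWith_abelField (hCa u hu) (hCb u hu)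
    · exact (ha.mul continuousOn_const).add (hb.mul continuousOn_const)
    · rw [h2ε, mem_closedBall_zero_iff, Real.norm_eq_abs] at hw
      rw [Real.norm_eq_abs, Real.coe_toNNReal _ (by positivity)]
      exact abs_abelField_le (hCa u hu) (hCb u hu) hw
    · rw [h2ε, Real.coe_toNNReal _ (by positivity), Real.coe_toNNReal _ hε.le]
      calc (Ca * (2 * ε) ^ 3 + Cb * (2 * ε) ^ 2) * max (M - u₀) (u₀ - m)
          ≤ (Ca * (2 * ε) ^ 3 + Cb * (2 * ε) ^ 2) * (M - m) := by
            gcongr; exact max_le (by linarith [hu₀.1]) (by linarith [hu₀.2])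
        _ = ε * ((8 * Ca * ε + 4 * Cb) * (M - m) * ε) := by ring
        _ ≤ ε * (X * ε) := by gcongr; exact mul_le_mul_of_nonneg_right (by nlinarith) hmM
        _ ≤ 2 * ε - ε := by nlinarith
  exact hpl.exists_eq_forall_mem_Icc_hasDerivWithinAt
    (by rw [mem_closedBall_zero_iff, Real.norm_eq_abs, Real.coe_toNNReal _ hε.le]; exact hw₀.le)

lemma eqOn_of_hasDerivWithinAt_abelField {A B f g : ℝ → ℝ} {a b : ℝ}
    (hA : ContinuousOn A (Icc a b)) (hB : ContinuousOn B (Icc a b))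
    (hf : ∀ t ∈ Icc a b, HasDerivWithinAt f (abelField (A t) (B t) (f t)) (Icc a b) t)
    (hg : ∀ t ∈ Icc a b, HasDerivWithinAt g (abelField (A t) (B t) (g t)) (Icc a b) t)
    (hfg : f a = g a) : EqOn f g (Icc a b) := by
  have hfc : ContinuousOn f (Icc a b) := fun t ht => (hf t ht).continuousWithinAt
  have hgc : ContinuousOn g (Icc a b) := fun t ht => (hg t ht).continuousWithinAt
  obtain ⟨CA, hCA⟩ := isCompact_Icc.exists_bound_of_continuousOn hA
  obtain ⟨CB, hCB⟩ := isCompact_Icc.exists_bound_of_continuousOn hB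
  obtain ⟨Rf, hRf⟩ := isCompact_Icc.exists_bound_of_continuousOn hfc
  obtain ⟨Rg, hRg⟩ := isCompact_Icc.exists_bound_of_continuousOn hgc
  have hright : ∀ φ : ℝ → ℝ,
      (∀ t ∈ Icc a b, HasDerivWithinAt φ (abelField (A t) (B t) (φ t)) (Icc a b) t) →
      ∀ t ∈ Ico a b, HasDerivWithinAt φ (abelField (A t) (B t) (φ t)) (Ici t) t :=
    fun φ hφ t ht =>
      (hφ t (Ico_subset_Icc_self ht)).mono_of_mem_nhdsWithin (Icc_mem_nhdsGE_of_mem ht)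
  refine ODE_solution_unique_of_mem_Icc_right (s := fun _ => closedBall 0 (max Rf Rg))
    (fun t ht => lipschitzOnWith_abelField (R := max Rf Rg) (hCA t (Ico_subset_Icc_self ht))
      (hCB t (Ico_subset_Icc_self ht))) hfc (hright f hf) (fun t ht => ?_) hgc (hright g hg)
    (fun t ht => ?_) hfg
  · exact mem_closedBall_zero_iff.2 ((hRf t (Ico_subset_Icc_self ht)).trans (le_max_left _ _))
  · exact mem_closedBall_zero_iff.2 ((hRg t (Ico_subset_Icc_self ht)).trans (le_max_right _ _))

theorem stmt_2 (A B A₁ B₁ s : ℝ → ℝ)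
    (hs : ∀ t ∈ Icc (0:ℝ) 1, HasDerivAt s (deriv s t) t)
    (hs' : ContinuousOn (deriv s) (Icc 0 1))
    (hsper : s 0 = s 1)
    (hA₁ : Continuous A₁) (hB₁ : Continuous B₁)
    (hA : ∀ t ∈ Icc (0:ℝ) 1, A t = deriv s t * A₁ (s t))
    (hB : ∀ t ∈ Icc (0:ℝ) 1, B t = deriv s t * B₁ (s t)) :
    ∃ ε > (0:ℝ), ∀ z : ℝ → ℝ,
      (∀ t ∈ Icc (0:ℝ) 1, HasDerivAt z (A t * z t ^ 3 + B t * z t ^ 2) t) →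
      |z 0| < ε → z 0 = z 1 := by
  have hsc : ContinuousOn s (Icc 0 1) := fun t ht => (hs t ht).continuousAt.continuousWithinAt
  obtain ⟨m, hm⟩ := (isCompact_Icc.image_of_continuousOn hsc).bddBelow
  obtain ⟨M, hM⟩ := (isCompact_Icc.image_of_continuousOn hsc).bddAbove
  have hsJ : MapsTo s (Icc 0 1) (Icc m M) :=
    fun t ht => ⟨hm (mem_image_of_mem s ht), hM (mem_image_of_mem s ht)⟩
  obtain ⟨ε, hε, hsol⟩ := exists_hasDerivWithinAt_abelField hA₁.continuousOn hB₁.continuousOn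
    (hsJ (left_mem_Icc.2 zero_le_one))
  refine ⟨ε, hε, fun z hz hz0 => ?_⟩
  obtain ⟨y, hy0, hy⟩ := hsol (z 0) hz0
  have hys : ∀ t ∈ Icc (0:ℝ) 1,
      HasDerivWithinAt (y ∘ s) (abelField (A t) (B t) (y (s t))) (Icc 0 1) t := by
    intro t ht
    refine ((hy (s t) (hsJ ht)).comp t (hs t ht).hasDerivWithinAt hsJ).congr_deriv ?_
    rw [hA t ht, hB t ht, abelField, abelField]; ring
  have hAc : ContinuousOn A (Icc 0 1) := (hs'.mul (hA₁.comp_continuousOn hsc)).congr hA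
  have hBc : ContinuousOn B (Icc 0 1) := (hs'.mul (hB₁.comp_continuousOn hsc)).congr hB
  have hzy := eqOn_of_hasDerivWithinAt_abelField hAc hBc (fun t ht => (hz t ht).hasDerivWithinAt)
    hys hy0.symm
  calc z 0 = y (s 1) := by rw [← hsper, hy0]
    _ = z 1 := (hzy (right_mem_Icc.2 zero_le_one)).symm
end

section
/- Let A, B : [0,1] → ℝ be continuous piecewise linear functions with nodes at t_k = k/n, with slopes m_k and n_k respectively on [t_{k-1}, t_k]. If A(1/2) = B(1/2) = 0, m_k = m_{n+1-k}, and n_k = n_{n+1-k} for all k, then z = 0 is a center for z' = A(t)z³ + B(t)z²: there exists ε > 0 such that every solution with |z(0)| < ε satisfies z(0) = z(1). -/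
/-!
With symmetric slopes, `t ↦ A t + A (1 - t)` is constant on every piece, hence on `[0,1]`;
evaluating at `t = 1/2` shows `A (1 - t) = -A t`, and likewise for `B`. Hence if `z` solves
`z' = A(t) z³ + B(t) z²` on `[0,1]`, so does `t ↦ z (1 - t)`; the two solutions agree at
`t = 1/2`, so by uniqueness they agree at `t = 1`, which says `z 1 = z 0`. Every solution is
periodic, so any `ε` works.
-/

open Set Metric NNReal

def IsAffineOnPieces (n : ℕ) (A : ℝ → ℝ) (m : ℕ → ℝ) : Prop :=
  ∀ k, 1 ≤ k → k ≤ n → ∀ t ∈ Icc (((k:ℝ)-1)/n) ((k:ℝ)/n),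
    A t = A (((k:ℝ)-1)/n) + m k * (t - ((k:ℝ)-1)/n)

lemma exists_mem_piece {n : ℕ} (hn : 1 ≤ n) {t : ℝ} (ht : t ∈ Icc (0:ℝ) 1) :
    ∃ k, 1 ≤ k ∧ k ≤ n ∧ t ∈ Icc (((k:ℝ)-1)/n) ((k:ℝ)/n) := by
  have hn0 : (0:ℝ) < n := by exact_mod_cast hn
  have htn : 0 ≤ t * n := mul_nonneg ht.1 hn0.le
  rcases Nat.eq_zero_or_pos ⌈t * n⌉₊ with h0 | hpos
  · have ht0 : t = 0 := le_antisymm (nonpos_of_mul_nonpos_left (Nat.ceil_eq_zero.mp h0) hn0) ht.1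
    refine ⟨1, le_rfl, hn, ?_⟩
    simp [ht0, hn0.le]
  · refine ⟨⌈t * n⌉₊, hpos, Nat.ceil_le.mpr (by nlinarith [ht.2]), ?_⟩
    rw [mem_Icc, div_le_iff₀ hn0, le_div_iff₀ hn0]
    exact ⟨by linarith [Nat.ceil_lt_add_one htn], Nat.le_ceil _⟩

lemma eq_apply_zero_of_const_on_pieces {n : ℕ} (hn : 1 ≤ n) {f : ℝ → ℝ}
    (hf : ∀ k, 1 ≤ k → k ≤ n →
      ∀ t ∈ Icc (((k:ℝ)-1)/n) ((k:ℝ)/n), f t = f (((k:ℝ)-1)/n))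
    {t : ℝ} (ht : t ∈ Icc (0:ℝ) 1) : f t = f 0 := by
  have hn0 : (0:ℝ) < n := by exact_mod_cast hn
  have nodes : ∀ k ≤ n, f ((k:ℝ)/n) = f 0 := by
    intro k hk
    induction k with
    | zero => simp
    | succ k ih =>
      have hright :
          ((k + 1 : ℕ) : ℝ) / n ∈ Icc ((((k + 1 : ℕ) : ℝ) - 1)/n) (((k + 1 : ℕ) : ℝ)/n) :=
        ⟨div_le_div_of_nonneg_right (by linarith) hn0.le, le_rfl⟩
      rw [hf (k + 1) (by omega) hk _ hright, ← ih (by omega)]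
      push_cast
      ring_nf
  obtain ⟨k, hk1, hkn, hk⟩ := exists_mem_piece hn ht
  rw [hf k hk1 hkn t hk, ← nodes (k - 1) (by omega), Nat.cast_sub hk1, Nat.cast_one]

namespace IsAffineOnPieces

variable {n : ℕ} {A : ℝ → ℝ} {m : ℕ → ℝ}

/-- `1 - t` runs through the `(n+1-k)`-th piece, which has the same slope traversed backwards,
so the two linear terms cancel. -/
lemma add_apply_one_sub_eq (hA : IsAffineOnPieces n A m)
    (hsym : ∀ k, 1 ≤ k → k ≤ n → m k = m (n + 1 - k))
    {k : ℕ} (hk1 : 1 ≤ k) (hkn : k ≤ n) {t : ℝ}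
    (ht : t ∈ Icc (((k:ℝ)-1)/n) ((k:ℝ)/n)) :
    A t + A (1 - t) = A (((k:ℝ)-1)/n) + A (1 - ((k:ℝ)-1)/n) := by
  have hn0 : (0:ℝ) < n := by exact_mod_cast hk1.trans hkn
  have hcast : ((n + 1 - k : ℕ) : ℝ) = n + 1 - k := by
    rw [Nat.cast_sub (by omega)]; push_cast; ring
  have hleft : (((n + 1 - k : ℕ) : ℝ) - 1) / n = 1 - k / n := by
    rw [hcast]; field_simp; ring
  have hright : ((n + 1 - k : ℕ) : ℝ) / n = 1 - (k - 1) / n := by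
    rw [hcast]; field_simp; ring
  have hlen : ((k:ℝ) - 1) / n ≤ k / n := div_le_div_of_nonneg_right (by linarith) hn0.le
  have hA' := hA (n + 1 - k) (by omega) (by omega)
  rw [hleft, hright, ← hsym k hk1 hkn] at hA'
  rw [hA k hk1 hkn t ht, hA' (1 - t) ⟨by linarith [ht.2], by linarith [ht.1]⟩,
    hA' (1 - ((k:ℝ)-1)/n) ⟨by linarith, le_rfl⟩]
  ring

lemma apply_one_sub (hA : IsAffineOnPieces n A m) (hn : 1 ≤ n)
    (hsym : ∀ k, 1 ≤ k → k ≤ n → m k = m (n + 1 - k)) (hmid : A (1/2) = 0)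
    {t : ℝ} (ht : t ∈ Icc (0:ℝ) 1) : A (1 - t) = -A t := by
  have hconst (s : ℝ) (hs : s ∈ Icc (0:ℝ) 1) : A s + A (1 - s) = A 0 + A (1 - 0) :=
    eq_apply_zero_of_const_on_pieces hn (f := fun s => A s + A (1 - s))
      (fun _ hk1 hkn _ hs => hA.add_apply_one_sub_eq hsym hk1 hkn hs) hs
  have hhalf := hconst (1/2) ⟨by norm_num, by norm_num⟩
  have := hconst t ht
  norm_num [hmid] at hhalf this
  linarith

end IsAffineOnPieces

lemma lipschitzOnWith_cubic {a b α β R : ℝ} (ha : |a| ≤ α) (hb : |b| ≤ β) :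
    LipschitzOnWith (3 * α * R ^ 2 + 2 * β * R).toNNReal (fun x => a * x ^ 3 + b * x ^ 2)
      (closedBall 0 R) := by
  refine LipschitzOnWith.of_dist_le' fun x hx y hy => ?_
  rw [mem_closedBall_zero_iff, Real.norm_eq_abs] at hx hy
  have hα : 0 ≤ α := (abs_nonneg a).trans ha
  have hβ : 0 ≤ β := (abs_nonneg b).trans hb
  have hquad : |x ^ 2 + x * y + y ^ 2| ≤ 3 * R ^ 2 := by
    rw [abs_le] at hx hy ⊢
    constructor <;> nlinarith
  have hlin : |x + y| ≤ 2 * R := (abs_add_le x y).trans (by linarith)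
  rw [Real.dist_eq, Real.dist_eq]
  calc |a * x ^ 3 + b * x ^ 2 - (a * y ^ 3 + b * y ^ 2)|
      = |a * (x ^ 2 + x * y + y ^ 2) + b * (x + y)| * |x - y| := by
        rw [← abs_mul]; ring_nf
    _ ≤ (|a| * |x ^ 2 + x * y + y ^ 2| + |b| * |x + y|) * |x - y| := by
        gcongr
        exact (abs_add_le _ _).trans_eq (by rw [abs_mul, abs_mul])
    _ ≤ (3 * α * R ^ 2 + 2 * β * R) * |x - y| := by
        gcongr ?_ * _
        nlinarith [abs_nonneg a, abs_nonneg b, abs_nonneg (x + y),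
          abs_nonneg (x ^ 2 + x * y + y ^ 2)]

lemma exists_lipschitzOnWith_cubic {A B : ℝ → ℝ} {T : Set ℝ} (hT : IsCompact T)
    (hA : ContinuousOn A T) (hB : ContinuousOn B T) (R : ℝ) :
    ∃ K, ∀ t ∈ T,
      LipschitzOnWith K (fun x => A t * x ^ 3 + B t * x ^ 2) (closedBall 0 R) := by
  obtain ⟨α, hα⟩ := hT.exists_bound_of_continuousOn hA
  obtain ⟨β, hβ⟩ := hT.exists_bound_of_continuousOn hB
  exact ⟨_, fun t ht => lipschitzOnWith_cubic (hα t ht) (hβ t ht)⟩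

theorem apply_zero_eq_apply_one_of_reflect_neg {E : Type*} [NormedAddCommGroup E]
    [NormedSpace ℝ E] {v : ℝ → E → E} {s : Set E} {K : ℝ≥0} {z : ℝ → E}
    (hv : ∀ t ∈ Icc (0:ℝ) 1, LipschitzOnWith K (v t) s)
    (hodd : ∀ t ∈ Icc (0:ℝ) 1, ∀ x, v (1 - t) x = -v t x)
    (hz : ∀ t ∈ Icc (0:ℝ) 1, HasDerivAt z (v t (z t)) t)
    (hzs : ∀ t ∈ Icc (0:ℝ) 1, z t ∈ s) :
    z 0 = z 1 := by
  have hsub : Icc (1/2 : ℝ) 1 ⊆ Icc 0 1 := Icc_subset_Icc (by norm_num) le_rfl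
  have hIco : Ico (1/2 : ℝ) 1 ⊆ Icc 0 1 := Ico_subset_Icc_self.trans hsub
  have hrefl : ∀ t ∈ Icc (0:ℝ) 1, 1 - t ∈ Icc (0:ℝ) 1 :=
    fun t ht => ⟨by linarith [ht.2], by linarith [ht.1]⟩
  have hzc : ContinuousOn z (Icc 0 1) := fun t ht => (hz t ht).continuousAt.continuousWithinAt
  have hw : ∀ t ∈ Icc (0:ℝ) 1, HasDerivAt (fun s => z (1 - s)) (v t (z (1 - t))) t := by
    intro t ht
    have := (hz (1 - t) (hrefl t ht)).scomp t ((hasDerivAt_id t).const_sub 1)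
    rwa [hodd t ht, neg_one_smul, neg_neg] at this
  have huniq : EqOn z (fun s => z (1 - s)) (Icc (1/2) 1) :=
    ODE_solution_unique_of_mem_Icc_right (s := fun _ => s) (fun t ht => hv t (hIco ht))
      (hzc.mono hsub) (fun t ht => (hz t (hIco ht)).hasDerivWithinAt)
      (fun t ht => hzs t (hIco ht))
      ((hzc.comp (continuous_const.sub continuous_id).continuousOn hrefl).mono hsub)
      (fun t ht => (hw t (hIco ht)).hasDerivWithinAt) (fun t ht => hzs _ (hrefl t (hIco ht)))
      (by norm_num)
  simpa using (huniq ⟨by norm_num, le_rfl⟩).symm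

theorem stmt_5 (n : ℕ) (hn : 1 ≤ n) (A B : ℝ → ℝ) (m nn : ℕ → ℝ)
    (hA : ContinuousOn A (Icc 0 1)) (hB : ContinuousOn B (Icc 0 1))
    (haffA : ∀ k, 1 ≤ k → k ≤ n →
      ∀ t ∈ Icc (((k:ℝ)-1)/n) ((k:ℝ)/n),
        A t = A (((k:ℝ)-1)/n) + m k * (t - ((k:ℝ)-1)/n))
    (haffB : ∀ k, 1 ≤ k → k ≤ n →
      ∀ t ∈ Icc (((k:ℝ)-1)/n) ((k:ℝ)/n),
        B t = B (((k:ℝ)-1)/n) + nn k * (t - ((k:ℝ)-1)/n))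
    (hmidA : A (1/2) = 0) (hmidB : B (1/2) = 0)
    (hsymA : ∀ k, 1 ≤ k → k ≤ n → m k = m (n + 1 - k))
    (hsymB : ∀ k, 1 ≤ k → k ≤ n → nn k = nn (n + 1 - k)) :
    ∃ ε > (0:ℝ), ∀ z : ℝ → ℝ,
      (∀ t ∈ Icc (0:ℝ) 1, HasDerivAt z (A t * z t ^ 3 + B t * z t ^ 2) t) →
      |z 0| < ε → z 0 = z 1 := by
  refine ⟨1, one_pos, fun z hz _ => ?_⟩
  have hzc : ContinuousOn z (Icc 0 1) := fun t ht => (hz t ht).continuousAt.continuousWithinAt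
  obtain ⟨R, hR⟩ := isCompact_Icc.exists_bound_of_continuousOn hzc
  obtain ⟨K, hK⟩ := exists_lipschitzOnWith_cubic isCompact_Icc hA hB R
  refine apply_zero_eq_apply_one_of_reflect_neg hK (fun t ht x => ?_) hz
    (fun t ht => mem_closedBall_zero_iff.mpr (hR t ht))
  rw [IsAffineOnPieces.apply_one_sub haffA hn hsymA hmidA ht,
    IsAffineOnPieces.apply_one_sub haffB hn hsymB hmidB ht]
  ring
end

section
/- For the quartic equation z' = z⁴ + A(t)z³ + B(t)z² with continuous A, B, define B̄(t) = ∫₀ᵗ B and suppose ∫₀¹ B = 0 and ∫₀¹ A = 0. If additionally ∫₀¹ [A(t)B̄(t) + 1] dt ≠ 0, then the solution z = 0 is an isolated periodic solution of multiplicity 4, i.e., V₂(1) = V₃(1) = 0 and V₄(1) ≠ 0, where V_k are defined by V₁ ≡ 1 and V_k(t) = -k∫₀ᵗ [B V_{k-1} + A V_{k-2} + V_{k-3}] (with V₀ = V_{-1} = 0). -/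
/-!
With `F t = ∫₀ᵗ B` and `G t = ∫₀ᵗ A`, the recursion integrates in closed form on
`[0, 1]`: `V₂ = -2F`, and since `(G - F²)' = A - 2BF` we get `V₃ = 3F² - 3G`. The integrand of `V₄`
is then `(F³ - 3FG)' + (AF + 1)`, so once `F 1 = G 1 = 0` the boundary term vanishes and
`V₄ 1 = -4 ∫₀¹ (A F + 1) = -4 η₄`.
-/

open Set intervalIntegral MeasureTheory

section Antiderivative

variable {f φ Φ : ℝ → ℝ} {a b t : ℝ}

theorem hasDerivAt_integral_of_mem_Ioo (hf : ContinuousOn f (Icc a b)) (ht : t ∈ Ioo a b) :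
    HasDerivAt (fun u => ∫ s in a..u, f s) (f t) t :=
  integral_hasDerivAt_right
    ((hf.mono (Icc_subset_Icc_right ht.2.le)).intervalIntegrable_of_Icc ht.1.le)
    ((hf.mono Ioo_subset_Icc_self).stronglyMeasurableAtFilter isOpen_Ioo t ht)
    (hf.continuousAt (Icc_mem_nhds ht.1 ht.2))

theorem continuousOn_integral_of_continuousOn (hab : a ≤ b) (hf : ContinuousOn f (Icc a b)) :
    ContinuousOn (fun u => ∫ s in a..u, f s) (Icc a b) := by
  have := continuousOn_primitive_interval' (μ := volume) (hf.intervalIntegrable_of_Icc hab)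
    left_mem_uIcc
  rwa [uIcc_of_le hab] at this

theorem integral_eq_sub_of_hasDerivAt_of_mem_Icc (hΦ : ContinuousOn Φ (Icc a b))
    (hderiv : ∀ x ∈ Ioo a b, HasDerivAt Φ (φ x) x) (hφ : ContinuousOn φ (Icc a b))
    (ht : t ∈ Icc a b) : ∫ s in a..t, φ s = Φ t - Φ a :=
  integral_eq_sub_of_hasDerivAt_of_le ht.1 (hΦ.mono (Icc_subset_Icc_right ht.2))
    (fun x hx => hderiv x ⟨hx.1, hx.2.trans_le ht.2⟩)
    ((hφ.mono (Icc_subset_Icc_right ht.2)).intervalIntegrable_of_Icc ht.1)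

end Antiderivative

section Recursion

variable {A B F G : ℝ → ℝ} {a b t : ℝ}

theorem integral_mul_neg_two_mul_add_eq (hA : ContinuousOn A (Icc a b))
    (hB : ContinuousOn B (Icc a b)) (hF : ContinuousOn F (Icc a b))
    (hG : ContinuousOn G (Icc a b)) (hF' : ∀ x ∈ Ioo a b, HasDerivAt F (B x) x)
    (hG' : ∀ x ∈ Ioo a b, HasDerivAt G (A x) x) (ht : t ∈ Icc a b) :
    ∫ s in a..t, (B s * (-2 * F s) + A s) = (G t - F t ^ 2) - (G a - F a ^ 2) :=
  integral_eq_sub_of_hasDerivAt_of_mem_Icc (hG.sub (hF.pow 2))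
    (fun x hx => ((hG' x hx).sub ((hF' x hx).pow 2)).congr_deriv (by push_cast; ring))
    ((hB.mul (continuousOn_const.mul hF)).add hA) ht

theorem integral_mul_add_mul_add_one_eq (hab : a ≤ b) (hA : ContinuousOn A (Icc a b))
    (hB : ContinuousOn B (Icc a b)) (hF : ContinuousOn F (Icc a b))
    (hG : ContinuousOn G (Icc a b)) (hF' : ∀ x ∈ Ioo a b, HasDerivAt F (B x) x)
    (hG' : ∀ x ∈ Ioo a b, HasDerivAt G (A x) x) :
    ∫ s in a..b, (B s * (3 * F s ^ 2 - 3 * G s) + A s * (-2 * F s) + 1) =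
      (F b ^ 3 - 3 * (F b * G b)) - (F a ^ 3 - 3 * (F a * G a)) +
        ∫ s in a..b, (A s * F s + 1) := by
  have hcubic : ContinuousOn (fun s => 3 * F s ^ 2 * B s - 3 * (B s * G s + F s * A s))
      (Icc a b) :=
    ((continuousOn_const.mul (hF.pow 2)).mul hB).sub
      (continuousOn_const.mul ((hB.mul hG).add (hF.mul hA)))
  have hrest : ContinuousOn (fun s => A s * F s + 1) (Icc a b) :=
    (hA.mul hF).add continuousOn_const
  rw [← integral_eq_sub_of_hasDerivAt_of_mem_Icc (Φ := fun u => F u ^ 3 - 3 * (F u * G u))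
      ((hF.pow 3).sub (continuousOn_const.mul (hF.mul hG)))
      (fun x hx => (((hF' x hx).pow 3).sub (((hF' x hx).mul (hG' x hx)).const_mul 3)).congr_deriv
        (by push_cast; ring)) hcubic (right_mem_Icc.2 hab),
    ← integral_add (hcubic.intervalIntegrable_of_Icc hab) (hrest.intervalIntegrable_of_Icc hab)]
  exact integral_congr fun s _ => by ring

end Recursion

theorem stmt_16 (A B V₁ V₂ V₃ V₄ : ℝ → ℝ)
    (hA : ContinuousOn A (Icc 0 1)) (hB : ContinuousOn B (Icc 0 1))
    (hV₁ : ∀ t : ℝ, V₁ t = 1)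
    (hV₂ : ∀ t : ℝ, V₂ t = -2 * ∫ s in (0:ℝ)..t, B s * V₁ s)
    (hV₃ : ∀ t : ℝ, V₃ t = -3 * ∫ s in (0:ℝ)..t, (B s * V₂ s + A s * V₁ s))
    (hV₄ : ∀ t : ℝ, V₄ t = -4 * ∫ s in (0:ℝ)..t, (B s * V₃ s + A s * V₂ s + V₁ s))
    (hBint : (∫ s in (0:ℝ)..1, B s) = 0)
    (hAint : (∫ s in (0:ℝ)..1, A s) = 0)
    (hη₄ : (∫ t in (0:ℝ)..1, (A t * (∫ s in (0:ℝ)..t, B s) + 1)) ≠ 0) :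
    V₂ 1 = 0 ∧ V₃ 1 = 0 ∧ V₄ 1 ≠ 0 := by
  set F : ℝ → ℝ := fun t => ∫ s in (0:ℝ)..t, B s
  set G : ℝ → ℝ := fun t => ∫ s in (0:ℝ)..t, A s
  have hF := continuousOn_integral_of_continuousOn zero_le_one hB
  have hG := continuousOn_integral_of_continuousOn zero_le_one hA
  have hF' : ∀ x ∈ Ioo (0:ℝ) 1, HasDerivAt F (B x) x := fun _ hx =>
    hasDerivAt_integral_of_mem_Ioo hB hx
  have hG' : ∀ x ∈ Ioo (0:ℝ) 1, HasDerivAt G (A x) x := fun _ hx =>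
    hasDerivAt_integral_of_mem_Ioo hA hx
  have hV₂F : ∀ t, V₂ t = -2 * F t := by simp [hV₂, hV₁, F]
  have hV₃FG : ∀ t ∈ Icc (0:ℝ) 1, V₃ t = 3 * F t ^ 2 - 3 * G t := fun t ht => by
    simp only [hV₃, hV₂F, hV₁, mul_one]
    rw [integral_mul_neg_two_mul_add_eq hA hB hF hG hF' hG' ht]
    simp only [F, G, integral_same]
    ring
  have hV₄η : V₄ 1 = -4 * ∫ t in (0:ℝ)..1, (A t * F t + 1) := by
    rw [hV₄, integral_congr fun s hs => by rw [hV₃FG s (by simpa using hs), hV₂F, hV₁],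
      integral_mul_add_mul_add_one_eq zero_le_one hA hB hF hG hF' hG']
    simp [F, hAint, hBint]
  refine ⟨by simp [hV₂F, F, hBint], ?_, ?_⟩
  · simp [hV₃FG 1 (right_mem_Icc.2 zero_le_one), F, G, hAint, hBint]
  · rw [hV₄η]
    exact mul_ne_zero (by norm_num) hη₄
end

section
/- Let A, B : [0,1] → ℝ be continuous with A(1/2 + t) = -A(1/2 - t) and B(1/2 + t) = -B(1/2 - t) for t ∈ [0, 1/2]. Then for every n ≥ 1, the function V_n defined by V₁ ≡ 1, V₂(t) = -2∫₀ᵗ B, V_k(t) = -k∫₀ᵗ [B V_{k-1} + A V_{k-2}] satisfies V_n(1) = 0 for all n ≥ 2. -/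
/-!
The hypotheses say that `A` and `B` are antisymmetric under the reflection `t ↦ 1 - t` of
`[0,1]`. If `V (k-1)` and `V (k-2)` are continuous and symmetric under it, the integrand
`B V_{k-1} + A V_{k-2}` is continuous and antisymmetric, and the primitive from `0` of such a
function is continuous and symmetric. So every `V k` is symmetric, and for `n ≥ 2` this gives
`V n 1 = V n 0`, an integral over `[0,0]`.
-/

open Set intervalIntegral MeasureTheory

lemma apply_one_sub_eq_neg_of_antisymm_half_s19 {f : ℝ → ℝ}
    (hf : ∀ t ∈ Icc (0:ℝ) (1/2), f (1/2 + t) = -f (1/2 - t)) :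
    ∀ s ∈ Icc (0:ℝ) 1, f (1 - s) = -f s := by
  intro s hs
  rcases le_total s (1/2) with h | h
  · have := hf (1/2 - s) ⟨by linarith, by linarith [hs.1]⟩
    rwa [show (1:ℝ)/2 + (1/2 - s) = 1 - s by ring, show (1:ℝ)/2 - (1/2 - s) = s by ring] at this
  · have := hf (s - 1/2) ⟨by linarith, by linarith [hs.2]⟩
    rw [show (1:ℝ)/2 + (s - 1/2) = s by ring, show (1:ℝ)/2 - (s - 1/2) = 1 - s by ring] at this
    linarith

lemma integral_zero_one_sub_eq_of_antisymm {g : ℝ → ℝ} (hg : IntervalIntegrable g volume 0 1)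
    (hanti : ∀ s ∈ Icc (0:ℝ) 1, g (1 - s) = -g s) {t : ℝ} (ht : t ∈ Icc (0:ℝ) 1) :
    ∫ s in (0:ℝ)..(1 - t), g s = ∫ s in (0:ℝ)..t, g s := by
  have h01 : uIcc (0:ℝ) 1 = Icc 0 1 := uIcc_of_le zero_le_one
  have reflect : ∀ a ∈ Icc (0:ℝ) 1, ∫ s in (1 - a)..1, g s = -∫ s in (0:ℝ)..a, g s := by
    intro a ha
    have hsub : uIcc 0 a ⊆ Icc (0:ℝ) 1 := h01 ▸ uIcc_subset_uIcc_left (h01 ▸ ha)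
    have hcomp := integral_comp_sub_left g 1 (a := 0) (b := a)
    rw [sub_zero] at hcomp
    rw [← intervalIntegral.integral_neg, ← hcomp]
    exact integral_congr fun s hs => hanti s (hsub hs)
  have h1t : 1 - t ∈ Icc (0:ℝ) 1 := ⟨by linarith [ht.2], by linarith [ht.1]⟩
  have hmem : ∀ a ∈ Icc (0:ℝ) 1, a ∈ uIcc (0:ℝ) 1 := fun a ha => h01 ▸ ha
  have hvanish : ∫ s in (0:ℝ)..1, g s = 0 := by
    have := reflect 1 (right_mem_Icc.2 zero_le_one)
    rw [sub_self] at this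
    linarith
  have hsplit := integral_add_adjacent_intervals
    (hg.mono_set (uIcc_subset_uIcc_left (hmem _ h1t)))
    (hg.mono_set (uIcc_subset_uIcc (hmem _ h1t) (hmem _ (right_mem_Icc.2 zero_le_one))))
  rw [reflect t ht, hvanish] at hsplit
  linarith

def ContinuousSymmOnUnitInterval (f : ℝ → ℝ) : Prop :=
  ContinuousOn f (Icc 0 1) ∧ ∀ t ∈ Icc (0:ℝ) 1, f (1 - t) = f t

lemma continuousSymmOnUnitInterval_of_eq_mul_primitive {f g : ℝ → ℝ} {c : ℝ}
    (hf : ∀ t, f t = c * ∫ s in (0:ℝ)..t, g s) (hg : ContinuousOn g (Icc 0 1))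
    (hanti : ∀ s ∈ Icc (0:ℝ) 1, g (1 - s) = -g s) :
    ContinuousSymmOnUnitInterval f := by
  have hint : IntervalIntegrable g volume 0 1 := hg.intervalIntegrable_of_Icc zero_le_one
  refine ⟨?_, fun t ht => by rw [hf, hf, integral_zero_one_sub_eq_of_antisymm hint hanti ht]⟩
  rw [funext hf, ← uIcc_of_le zero_le_one]
  exact continuousOn_const.mul (continuousOn_primitive_interval' hint left_mem_uIcc)

theorem stmt_19 (A B : ℝ → ℝ) (V : ℕ → ℝ → ℝ)
    (hA : ContinuousOn A (Icc 0 1)) (hB : ContinuousOn B (Icc 0 1))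
    (hAsym : ∀ t ∈ Icc (0:ℝ) (1/2), A (1/2 + t) = -A (1/2 - t))
    (hBsym : ∀ t ∈ Icc (0:ℝ) (1/2), B (1/2 + t) = -B (1/2 - t))
    (hV1 : ∀ t : ℝ, V 1 t = 1)
    (hV2 : ∀ t : ℝ, V 2 t = -2 * ∫ s in (0:ℝ)..t, B s)
    (hVk : ∀ k : ℕ, 3 ≤ k → ∀ t : ℝ,
      V k t = -(k:ℝ) * ∫ s in (0:ℝ)..t, (B s * V (k-1) s + A s * V (k-2) s)) :
    ∀ n : ℕ, 2 ≤ n → V n 1 = 0 := by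
  have hA' := apply_one_sub_eq_neg_of_antisymm_half_s19 hAsym
  have hB' := apply_one_sub_eq_neg_of_antisymm_half_s19 hBsym
  have hsymm : ∀ k : ℕ, ContinuousSymmOnUnitInterval (V (k + 1)) ∧
      ContinuousSymmOnUnitInterval (V (k + 2)) := by
    intro k
    induction k with
    | zero =>
      refine ⟨⟨?_, fun t _ => by rw [hV1, hV1]⟩,
        continuousSymmOnUnitInterval_of_eq_mul_primitive hV2 hB hB'⟩
      rw [funext hV1]
      exact continuousOn_const
    | succ k ih =>
      obtain ⟨⟨hcont₁, hsymm₁⟩, hcont₂, hsymm₂⟩ := ih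
      refine ⟨⟨hcont₂, hsymm₂⟩, continuousSymmOnUnitInterval_of_eq_mul_primitive
        (hVk (k + 3) (by omega)) ((hB.mul hcont₂).add (hA.mul hcont₁)) fun s hs => ?_⟩
      simp only [show k + 3 - 1 = k + 2 by omega, show k + 3 - 2 = k + 1 by omega]
      rw [hB' s hs, hA' s hs, hsymm₂ s hs, hsymm₁ s hs]
      ring
  intro n hn
  obtain ⟨k, rfl⟩ : ∃ k, n = k + 2 := ⟨n - 2, by omega⟩
  rw [← sub_zero (1:ℝ), (hsymm k).2.2 0 (left_mem_Icc.2 zero_le_one)]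
  rcases k with _ | k
  · simp [hV2]
  · simp [hVk (k + 1 + 2) (by omega)]
end
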